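/- A C² function u on a domain D ⊆ ℝⁿ is strongly p-plurisubharmonic (i.e. tr_L Hess_u(x) > 0 for every p-dimensional linear subspace L ⊆ ℝⁿ and every x ∈ D) if and only if the restriction u|_M is strongly subharmonic on every minimal p-dimensional submanifold M ⊆ D. -/

import Mathlib

noncomputable section
open Set Metric MeasureTheory
open scoped RealInnerProductSpace

/-- Euclidean space `ℝⁿ`. -/
abbrev Euc (n : ℕ) : Type := EuclideanSpace ℝ (Fin n)

/-- Complex Euclidean space `ℂ³`. -/
abbrev E3c : Type := EuclideanSpace ℂ (Fin 3)

/-- A domain in `ℝⁿ`: a nonempty connected open set. -/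
def IsEucDomain {n : ℕ} (D : Set (Euc n)) : Prop := IsOpen D ∧ IsConnected D

/-- The trace of the Hessian (within `s`) of `u` at `x` over the family `e`. -/
def hessTraceWithin {n p : ℕ} (u : Euc n → ℝ) (s : Set (Euc n)) (x : Euc n)
    (e : Fin p → Euc n) : ℝ :=
  ∑ i, iteratedFDerivWithin ℝ 2 u s x ![e i, e i]

/-- `ρ` is an exhaustion function of `D`: sublevel sets are compact. -/
def IsExhaustionOn {n : ℕ} (ρ : Euc n → ℝ) (D : Set (Euc n)) : Prop :=
  ∀ c : ℝ, IsCompact {x ∈ D | ρ x ≤ c}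

/-- A `C²` function is strongly `p`-plurisubharmonic on `D` if the sum of the `p`
smallest eigenvalues of its Hessian is positive at every point of `D`; equivalently,
the trace of the Hessian over every `p`-dimensional subspace (spanned by an
orthonormal `p`-frame) is positive. -/
def StronglyPPshOn (n p : ℕ) (u : Euc n → ℝ) (D : Set (Euc n)) : Prop :=
  ContDiffOn ℝ 2 u D ∧
  ∀ x ∈ D, ∀ e : Fin p → Euc n, Orthonormal ℝ e → 0 < hessTraceWithin u D x e

/-- A `C²` function is `p`-plurisubharmonic on `D` (trace form). -/
def PPshC2On (n p : ℕ) (u : Euc n → ℝ) (D : Set (Euc n)) : Prop :=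
  ContDiffOn ℝ 2 u D ∧
  ∀ x ∈ D, ∀ e : Fin p → Euc n, Orthonormal ℝ e → 0 ≤ hessTraceWithin u D x e

/-- A minimally convex domain in `ℝ³`: an open set admitting a smooth strongly
2-plurisubharmonic exhaustion function. -/
def MinimallyConvex (D : Set (Euc 3)) : Prop :=
  IsOpen D ∧ ∃ ρ : Euc 3 → ℝ, ContDiffOn ℝ (⊤ : ℕ∞) ρ D ∧ IsExhaustionOn ρ D ∧
    StronglyPPshOn 3 2 ρ D

/-- `h` is a (C²) harmonic function on the set `s`. -/
def HarmonicOnOpen {p : ℕ} (h : Euc p → ℝ) (s : Set (Euc p)) : Prop :=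
  ContDiffOn ℝ 2 h s ∧
  ∀ x ∈ s, ∑ i : Fin p,
    iteratedFDerivWithin ℝ 2 h s x
      ![EuclideanSpace.single i (1:ℝ), EuclideanSpace.single i (1:ℝ)] = 0

/-- An upper semicontinuous real function is subharmonic on `s` iff it satisfies the
maximum principle relative to harmonic comparison functions on closed balls in `s`. -/
def SubharmonicOn {p : ℕ} (u : Euc p → ℝ) (s : Set (Euc p)) : Prop :=
  UpperSemicontinuousOn u s ∧
  ∀ (c : Euc p) (r : ℝ), 0 < r → closedBall c r ⊆ s →
    ∀ h : Euc p → ℝ, ContinuousOn h (closedBall c r) → HarmonicOnOpen h (ball c r) →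
      (∀ x ∈ sphere c r, u x ≤ h x) → ∀ x ∈ closedBall c r, u x ≤ h x

/-- An upper semicontinuous function on `D ⊆ ℝⁿ` is `p`-plurisubharmonic if its restriction
to every affine `p`-plane (parametrized by a linear isometry from `ℝᵖ`) is subharmonic. -/
def PPshOn (n p : ℕ) (u : Euc n → ℝ) (D : Set (Euc n)) : Prop :=
  UpperSemicontinuousOn u D ∧
  ∀ (a : Euc n) (ι : Euc p →ₗᵢ[ℝ] Euc n),
    SubharmonicOn (fun y => u (a + ι y)) {y | a + ι y ∈ D}

/-- The `p`-convex hull of `K` in `D`. -/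
def PHull (n p : ℕ) (D K : Set (Euc n)) : Set (Euc n) :=
  {x ∈ D | ∀ u : Euc n → ℝ, PPshOn n p u D → u x ≤ sSup (u '' K)}

/-- Distance between two subsets of `ℝⁿ`. -/
def setDist {n : ℕ} (A B : Set (Euc n)) : ℝ := sInf (Set.image2 dist A B)

/-- `ρ` is a `C²` local defining function for `D` on the open set `U`. -/
def IsLocalDefiningFn {n : ℕ} (D : Set (Euc n)) (U : Set (Euc n)) (ρ : Euc n → ℝ) : Prop :=
  IsOpen U ∧ ContDiffOn ℝ 2 ρ U ∧ (∀ x ∈ U, (x ∈ D ↔ ρ x < 0)) ∧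
  (∀ x ∈ U, (x ∈ frontier D ↔ ρ x = 0)) ∧
  ∀ x ∈ U ∩ frontier D, fderivWithin ℝ ρ U x ≠ 0

/-- `D ⊆ ℝ³` is strongly minimally convex at the boundary point `x₀`:
the sum of the two principal curvatures w.r.t. the inner normal is positive, i.e. the trace
of the Hessian of a defining function over the tangent plane is positive. -/
def StronglyMinimallyConvexAt (D : Set (Euc 3)) (x₀ : Euc 3) : Prop :=
  x₀ ∈ frontier D ∧ ∃ U ρ, x₀ ∈ U ∧ IsLocalDefiningFn D U ρ ∧
    ∀ e : Fin 2 → Euc 3, Orthonormal ℝ e →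
      (∀ i, fderivWithin ℝ ρ U x₀ (e i) = 0) → 0 < hessTraceWithin ρ U x₀ e

/-- A strongly minimally convex domain in `ℝ³` (with `C²` boundary). -/
def StronglyMinimallyConvexDomain (D : Set (Euc 3)) : Prop :=
  IsOpen D ∧ ∃ U ρ, frontier D ⊆ U ∧ IsLocalDefiningFn D U ρ ∧
    ∀ x ∈ frontier D, ∀ e : Fin 2 → Euc 3, Orthonormal ℝ e →
      (∀ i, fderivWithin ℝ ρ U x (e i) = 0) → 0 < hessTraceWithin ρ U x e

/-- The Gram matrix (first fundamental form) of a parametrization `φ : ℝᵖ → ℝⁿ`. -/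
def gramMat {p n : ℕ} (φ : Euc p → Euc n) (y : Euc p) : Matrix (Fin p) (Fin p) ℝ :=
  Matrix.of fun i j =>
    ⟪fderiv ℝ φ y (EuclideanSpace.single i (1:ℝ)),
      fderiv ℝ φ y (EuclideanSpace.single j (1:ℝ))⟫

/-- The Laplace–Beltrami operator of the metric induced by the immersion `φ`, applied
to a function `f` on the parameter domain:
`Δ f = (1/√det g) ∑ᵢ ∂ᵢ ( ∑ⱼ √det g · gⁱʲ · ∂ⱼ f )`. -/
def lapBel {p n : ℕ} (φ : Euc p → Euc n) (f : Euc p → ℝ) (y : Euc p) : ℝ :=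
  (Real.sqrt (gramMat φ y).det)⁻¹ *
    ∑ i : Fin p,
      fderiv ℝ (fun y' => ∑ j : Fin p,
          Real.sqrt (gramMat φ y').det * (gramMat φ y')⁻¹ i j *
            fderiv ℝ f y' (EuclideanSpace.single j (1:ℝ)))
        y (EuclideanSpace.single i (1:ℝ))

/-- A local parametrization of `M ⊆ ℝⁿ` near `x ∈ M` as a `p`-dimensional minimal
(C², embedded) submanifold: a C² immersion `φ` on an open set `U ⊆ ℝᵖ` whose image is
`M ∩ W`, all of whose coordinate functions are harmonic for the induced
Laplace–Beltrami operator (vanishing mean curvature). -/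
structure MinimalParam (p n : ℕ) (M : Set (Euc n)) (x : Euc n) where
  U : Set (Euc p)
  φ : Euc p → Euc n
  W : Set (Euc n)
  openU : IsOpen U
  openW : IsOpen W
  memW : x ∈ W
  smooth : ContDiffOn ℝ 2 φ U
  immersion : ∀ y ∈ U, Function.Injective (fderiv ℝ φ y)
  inj : Set.InjOn φ U
  image : φ '' U = M ∩ W
  minimal : ∀ y ∈ U, ∀ k : Fin n, lapBel φ (fun y' => φ y' k) y = 0

/-- `M ⊆ ℝⁿ` is an (embedded, C²) minimal `p`-dimensional submanifold. -/
def IsMinimalSubmanifold (p n : ℕ) (M : Set (Euc n)) : Prop :=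
  M.Nonempty ∧ ∀ x ∈ M, Nonempty (MinimalParam p n M x)

section Aux

lemma euc_eq_sum_single {p : ℕ} (x : Euc p) :
    x = ∑ i, x i • EuclideanSpace.single i (1:ℝ) := by
  ext k
  rw [WithLp.ofLp_sum, Finset.sum_apply]
  simp [EuclideanSpace.single_apply]

lemma diffAt_finset_prod {E : Type*} [NormedAddCommGroup E] [NormedSpace ℝ E]
    {ι : Type*} {f : ι → E → ℝ} {x : E} (s : Finset ι)
    (hf : ∀ i ∈ s, DifferentiableAt ℝ (f i) x) :
    DifferentiableAt ℝ (fun y => ∏ i ∈ s, f i y) x := by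
  classical
  induction s using Finset.cons_induction with
  | empty => simpa using differentiableAt_const (1:ℝ)
  | cons a s ha ih =>
      simp only [Finset.prod_cons]
      exact (hf a (by simp)).mul (ih fun i hi => hf i (by simp [hi]))

lemma diffAt_det {E : Type*} [NormedAddCommGroup E] [NormedSpace ℝ E] {m : ℕ}
    {A : E → Matrix (Fin m) (Fin m) ℝ} {x : E}
    (hA : ∀ i j, DifferentiableAt ℝ (fun y => A y i j) x) :
    DifferentiableAt ℝ (fun y => (A y).det) x := by
  simp only [Matrix.det_apply]
  apply DifferentiableAt.fun_sum
  intro σ _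
  have h := diffAt_finset_prod (f := fun i y => A y (σ i) i) Finset.univ
    (fun i _ => hA (σ i) i)
  simpa only [Units.smul_def, zsmul_eq_mul] using h.const_mul (((Equiv.Perm.sign σ : ℤ) : ℝ))

lemma gram_posDef {p n : ℕ} {φ : Euc p → Euc n} {y : Euc p}
    (hinj : Function.Injective (fderiv ℝ φ y)) : (gramMat φ y).PosDef := by
  refine Matrix.PosDef.of_dotProduct_mulVec_pos ?_ ?_
  · ext i j
    simp only [Matrix.conjTranspose_apply, gramMat, Matrix.of_apply, star_trivial]
    exact real_inner_comm _ _
  · intro v hv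
    have hwv : ∀ i, ((WithLp.equiv 2 (Fin p → ℝ)).symm v) i = v i := fun _ => rfl
    set w : Euc p := (WithLp.equiv 2 (Fin p → ℝ)).symm v with hw
    have hwne : w ≠ 0 := by
      intro h0
      apply hv
      funext i
      rw [← hwv i, h0]; rfl
    have hLw : fderiv ℝ φ y w =
        ∑ i, v i • fderiv ℝ φ y (EuclideanSpace.single i (1:ℝ)) := by
      conv_lhs => rw [euc_eq_sum_single w]
      rw [map_sum]
      exact Finset.sum_congr rfl fun i _ => by rw [hwv i, _root_.map_smul]
    have key : dotProduct (star v) ((gramMat φ y).mulVec v) =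
        ⟪fderiv ℝ φ y w, fderiv ℝ φ y w⟫ := by
      rw [hLw, sum_inner]
      simp only [real_inner_smul_left, inner_sum, real_inner_smul_right]
      simp only [dotProduct, Matrix.mulVec, Matrix.of_apply, star_trivial, gramMat]
      rw [Finset.sum_congr rfl (fun i (_ : i ∈ Finset.univ) => Finset.mul_sum _ _ _)]
      exact Finset.sum_congr rfl fun i _ => Finset.sum_congr rfl fun j _ => by ring
    rw [key]
    have hLwne : fderiv ℝ φ y w ≠ 0 := by
      intro h0
      apply hwne
      apply hinj
      simpa using h0
    exact lt_of_le_of_ne real_inner_self_nonneg (Ne.symm (inner_self_ne_zero.mpr hLwne))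

lemma hessTrace_eq {n q : ℕ} {D : Set (Euc n)} (hD : IsOpen D) (u : Euc n → ℝ)
    {x : Euc n} (hx : x ∈ D) (e : Fin q → Euc n) :
    hessTraceWithin u D x e = ∑ a, fderiv ℝ (fderiv ℝ u) x (e a) (e a) := by
  unfold hessTraceWithin
  refine Finset.sum_congr rfl fun a _ => ?_
  rw [iteratedFDerivWithin_two_apply u hD.uniqueDiffOn hx]
  have h1 : fderivWithin ℝ (fderivWithin ℝ u D) D x = fderivWithin ℝ (fderiv ℝ u) D x :=
    fderivWithin_congr (fun z hz => fderivWithin_of_isOpen hD hz) (fderivWithin_of_isOpen hD hx)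
  rw [show (![e a, e a] : Fin 2 → Euc n) 0 = e a from rfl,
    show (![e a, e a] : Fin 2 → Euc n) 1 = e a from rfl]
  rw [h1, fderivWithin_of_isOpen hD hx]

end Aux

section AlgebraLemma
open Matrix

open scoped MatrixOrder in
lemma exists_orthonormal_sum {p n : ℕ} (v : Fin p → Euc n)
    {g : Matrix (Fin p) (Fin p) ℝ} (hg : g.PosDef)
    (hgv : ∀ i j, g i j = ⟪v i, v j⟫)
    (H : Euc n →L[ℝ] Euc n →L[ℝ] ℝ) :
    ∃ e : Fin p → Euc n, Orthonormal ℝ e ∧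
      ∑ i, ∑ j, g⁻¹ i j * H (v i) (v j) = ∑ a, H (e a) (e a) := by
  classical
  have hps := hg.posSemidef
  set T := CFC.sqrt g with hT
  have hTps : T.PosSemidef := (CFC.sqrt_nonneg g).posSemidef
  have hTt : Tᵀ = T := by
    ext a b
    rw [Matrix.transpose_apply]
    conv_rhs => rw [← hTps.isHermitian.eq]
    simp [Matrix.conjTranspose_apply]
  have hTT : T * T = g := CFC.sqrt_mul_sqrt_self g hps.nonneg
  have hTdet : IsUnit T.det := by
    have hdet : T.det * T.det = g.det := by rw [← Matrix.det_mul, hTT]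
    have hgd := hg.det_pos
    have hne : T.det ≠ 0 := by
      intro h0
      rw [h0, zero_mul] at hdet
      exact hgd.ne' hdet.symm
    exact hne.isUnit
  set S := T⁻¹ with hS
  have hSt : Sᵀ = S := by rw [hS, Matrix.transpose_nonsing_inv, hTt]
  have hSsym : ∀ i j, S j i = S i j := by
    intro i j
    have := congrFun (congrFun hSt i) j
    rwa [Matrix.transpose_apply] at this
  have hSS : S * S = g⁻¹ := by rw [hS, ← Matrix.mul_inv_rev, hTT]
  have hSgS : S * g * S = 1 := by
    rw [← hTT, hS]
    calc T⁻¹ * (T * T) * T⁻¹ = (T⁻¹ * T) * (T * T⁻¹) := by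
          rw [← mul_assoc, ← mul_assoc]
      _ = 1 := by rw [Matrix.nonsing_inv_mul _ hTdet, Matrix.mul_nonsing_inv _ hTdet, one_mul]
  have h1 : ∀ (w : Euc n) (b : Fin p), H w (∑ j, S j b • v j) = ∑ j, S j b * H w (v j) := by
    intro w b
    rw [map_sum]
    exact Finset.sum_congr rfl fun j _ => by rw [_root_.map_smul, smul_eq_mul]
  have h2 : ∀ (z : Euc n) (a : Fin p),
      H (∑ i, S i a • v i) z = ∑ i, S i a * H (v i) z := by
    intro z a
    rw [map_sum, ContinuousLinearMap.sum_apply]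
    exact Finset.sum_congr rfl fun i _ => by
      rw [_root_.map_smul, ContinuousLinearMap.smul_apply, smul_eq_mul]
  have expand : ∀ a b : Fin p, H (∑ i, S i a • v i) (∑ j, S j b • v j)
      = ∑ i, ∑ j, S i a * S j b * H (v i) (v j) := by
    intro a b
    simp only [h2, h1, Finset.mul_sum]
    exact Finset.sum_congr rfl fun i _ => Finset.sum_congr rfl fun j _ => by ring
  have hinner : ∀ a b : Fin p,
      ⟪(∑ i, S i a • v i : Euc n), ∑ j, S j b • v j⟫ = ∑ i, ∑ j, S i a * S j b * g i j := by
    intro a b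
    rw [sum_inner]
    simp only [real_inner_smul_left, inner_sum, real_inner_smul_right, Finset.mul_sum]
    exact Finset.sum_congr rfl fun i _ => Finset.sum_congr rfl fun j _ => by
      rw [hgv]; ring
  refine ⟨fun a => ∑ i, S i a • v i, ?_, ?_⟩
  · rw [orthonormal_iff_ite]
    intro a b
    rw [hinner]
    have hmul : (S * (g * S)) a b = ∑ i, ∑ j, S i a * S j b * g i j := by
      rw [Matrix.mul_apply]
      simp only [Matrix.mul_apply, Finset.mul_sum]
      exact Finset.sum_congr rfl fun i _ => Finset.sum_congr rfl fun j _ => by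
        rw [hSsym i a]; ring
    rw [← hmul, ← Matrix.mul_assoc, hSgS, Matrix.one_apply]
  · have hexp : ∀ a : Fin p,
        H ((fun a => ∑ i, S i a • v i) a) ((fun a => ∑ i, S i a • v i) a)
          = ∑ i, ∑ j, S i a * S j a * H (v i) (v j) := fun a => expand a a
    conv_rhs => rw [Finset.sum_congr rfl fun a (_ : a ∈ Finset.univ) => hexp a]
    conv_rhs => rw [Finset.sum_comm]
    refine Finset.sum_congr rfl fun i _ => ?_
    conv_rhs => rw [Finset.sum_comm]
    refine Finset.sum_congr rfl fun j _ => ?_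
    rw [← hSS, Matrix.mul_apply, Finset.sum_mul]
    exact Finset.sum_congr rfl fun a _ => by rw [← hSsym a j]
end AlgebraLemma

section MainLemma

lemma lapBel_eq {n p : ℕ} {D : Set (Euc n)} (hD : IsOpen D)
    {u : Euc n → ℝ} (hu : ContDiffOn ℝ 2 u D)
    {U : Set (Euc p)} (hU : IsOpen U) {φ : Euc p → Euc n}
    (hφ : ContDiffOn ℝ 2 φ U)
    (himm : ∀ z ∈ U, Function.Injective (fderiv ℝ φ z))
    (himg : ∀ z ∈ U, φ z ∈ D)
    (hmin : ∀ z ∈ U, ∀ k : Fin n, lapBel φ (fun y' => φ y' k) z = 0)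
    {y : Euc p} (hy : y ∈ U) :
    lapBel φ (fun y' => u (φ y')) y =
      ∑ i, ∑ j, (gramMat φ y)⁻¹ i j *
        fderiv ℝ (fderiv ℝ u) (φ y)
          (fderiv ℝ φ y (EuclideanSpace.single i (1:ℝ)))
          (fderiv ℝ φ y (EuclideanSpace.single j (1:ℝ))) := by
  classical
  have hφdiff : ∀ z ∈ U, DifferentiableAt ℝ φ z := fun z hz =>
    (hφ.differentiableOn (by norm_num)).differentiableAt (hU.mem_nhds hz)
  have hdφC1 : ContDiffOn ℝ 1 (fderiv ℝ φ) U := hφ.fderiv_of_isOpen hU (by norm_num)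
  have hdφ : ∀ z ∈ U, DifferentiableAt ℝ (fderiv ℝ φ) z := fun z hz =>
    (hdφC1.differentiableOn (by norm_num)).differentiableAt (hU.mem_nhds hz)
  have hvj : ∀ z ∈ U, ∀ j : Fin p,
      DifferentiableAt ℝ (fun z' => fderiv ℝ φ z' (EuclideanSpace.single j (1:ℝ))) z :=
    fun z hz j => (hdφ z hz).clm_apply (differentiableAt_const _)
  have hgij : ∀ z ∈ U, ∀ i j : Fin p,
      DifferentiableAt ℝ (fun z' => gramMat φ z' i j) z := by
    intro z hz i j
    have := (hvj z hz i).inner ℝ (hvj z hz j)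
    simpa [gramMat] using this
  have hdet : ∀ z ∈ U, DifferentiableAt ℝ (fun z' => (gramMat φ z').det) z :=
    fun z hz => diffAt_det (fun i j => hgij z hz i j)
  have hPD : ∀ z ∈ U, (gramMat φ z).PosDef := fun z hz => gram_posDef (himm z hz)
  have hdetpos : ∀ z ∈ U, 0 < (gramMat φ z).det := fun z hz => (hPD z hz).det_pos
  have hsqrtpos : 0 < Real.sqrt (gramMat φ y).det := Real.sqrt_pos.mpr (hdetpos y hy)
  have hsq : ∀ z ∈ U, DifferentiableAt ℝ (fun z' => Real.sqrt (gramMat φ z').det) z :=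
    fun z hz =>
      ((Real.contDiffAt_sqrt (n := 1) (hdetpos z hz).ne').differentiableAt one_ne_zero).comp z
        (hdet z hz)
  have hadj : ∀ z ∈ U, ∀ i j : Fin p,
      DifferentiableAt ℝ (fun z' => (gramMat φ z').adjugate i j) z := by
    intro z hz i j
    simp only [Matrix.adjugate_apply]
    apply diffAt_det
    intro a b
    simp only [Matrix.updateRow_apply]
    by_cases hab : a = j
    · simp [hab]
    · simp only [if_neg hab]
      exact hgij z hz a b
  have hinv : ∀ z ∈ U, ∀ i j : Fin p,
      DifferentiableAt ℝ (fun z' => (gramMat φ z')⁻¹ i j) z := by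
    intro z hz i j
    have heq : (fun z' => (gramMat φ z')⁻¹ i j)
        = fun z' => ((gramMat φ z').det)⁻¹ * (gramMat φ z').adjugate i j := by
      funext z'
      rw [Matrix.inv_def, Matrix.smul_apply, Ring.inverse_eq_inv, smul_eq_mul]
    rw [heq]
    exact ((hdet z hz).inv (hdetpos z hz).ne').mul (hadj z hz i j)
  have hc : ∀ z ∈ U, ∀ i j : Fin p,
      DifferentiableAt ℝ
        (fun z' => Real.sqrt (gramMat φ z').det * (gramMat φ z')⁻¹ i j) z :=
    fun z hz i j => (hsq z hz).mul (hinv z hz i j)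
  set V : Fin p → Euc p → Euc n := fun i z =>
    ∑ j, (Real.sqrt (gramMat φ z).det * (gramMat φ z)⁻¹ i j) •
      fderiv ℝ φ z (EuclideanSpace.single j (1:ℝ)) with hV
  have hVdiff : ∀ z ∈ U, ∀ i, DifferentiableAt ℝ (V i) z := fun z hz i =>
    DifferentiableAt.fun_sum fun j _ => (hc z hz i j).smul (hvj z hz j)
  have hu1 : ∀ w ∈ D, DifferentiableAt ℝ u w := fun w hw =>
    (hu.differentiableOn (by norm_num)).differentiableAt (hD.mem_nhds hw)
  have hB : DifferentiableAt ℝ (fderiv ℝ u) (φ y) := by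
    have h2 : ContDiffAt ℝ 2 u (φ y) := hu.contDiffAt (hD.mem_nhds (himg y hy))
    exact (h2.fderiv_right (m := 1) (by norm_num)).differentiableAt one_ne_zero
  -- Step 1
  have hstep1 : ∀ i : Fin p,
      (fun z => ∑ j, Real.sqrt (gramMat φ z).det * (gramMat φ z)⁻¹ i j *
          fderiv ℝ (fun y' => u (φ y')) z (EuclideanSpace.single j (1:ℝ)))
        =ᶠ[nhds y] fun z => fderiv ℝ u (φ z) (V i z) := by
    intro i
    filter_upwards [hU.mem_nhds hy] with z hz
    have hcomp : fderiv ℝ (fun y' => u (φ y')) z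
        = (fderiv ℝ u (φ z)).comp (fderiv ℝ φ z) :=
      fderiv_comp z (hu1 (φ z) (himg z hz)) (hφdiff z hz)
    rw [hcomp, hV]
    rw [map_sum]
    simp only [ContinuousLinearMap.coe_comp', Function.comp_apply]
    exact Finset.sum_congr rfl fun j _ => by rw [_root_.map_smul, smul_eq_mul]
  -- Step 2
  have hBφ : HasFDerivAt (fun z => fderiv ℝ u (φ z))
      ((fderiv ℝ (fderiv ℝ u) (φ y)).comp (fderiv ℝ φ y)) y :=
    hB.hasFDerivAt.comp y (hφdiff y hy).hasFDerivAt
  have hstep2 : ∀ i : Fin p,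
      fderiv ℝ (fun z => fderiv ℝ u (φ z) (V i z)) y (EuclideanSpace.single i (1:ℝ))
        = fderiv ℝ (fderiv ℝ u) (φ y)
            (fderiv ℝ φ y (EuclideanSpace.single i (1:ℝ))) (V i y)
          + fderiv ℝ u (φ y) (fderiv ℝ (V i) y (EuclideanSpace.single i (1:ℝ))) := by
    intro i
    have h := hBφ.clm_apply (hVdiff y hy i).hasFDerivAt
    rw [h.fderiv]
    simp only [ContinuousLinearMap.add_apply, ContinuousLinearMap.comp_apply,
      ContinuousLinearMap.flip_apply, ContinuousLinearMap.coe_comp', Function.comp_apply]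
    exact add_comm _ _
  -- Step 3 : divergence-free
  have hdiv : ∑ i, fderiv ℝ (V i) y (EuclideanSpace.single i (1:ℝ)) = (0 : Euc n) := by
    ext k
    rw [WithLp.ofLp_sum, Finset.sum_apply]
    have hcompk : ∀ i : Fin p,
        (fderiv ℝ (V i) y (EuclideanSpace.single i (1:ℝ))) k
          = fderiv ℝ (fun z => V i z k) y (EuclideanSpace.single i (1:ℝ)) := by
      intro i
      have h1 : fderiv ℝ (fun z => V i z k) y
          = (EuclideanSpace.proj k : Euc n →L[ℝ] ℝ).comp (fderiv ℝ (V i) y) :=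
        ((EuclideanSpace.proj k : Euc n →L[ℝ] ℝ).hasFDerivAt.comp y
          (hVdiff y hy i).hasFDerivAt).fderiv
      rw [h1]
      rfl
    rw [Finset.sum_congr rfl fun i _ => hcompk i]
    have hVk : ∀ i : Fin p, (fun z => V i z k) =ᶠ[nhds y] fun z =>
        ∑ j, Real.sqrt (gramMat φ z).det * (gramMat φ z)⁻¹ i j *
          fderiv ℝ (fun y' => φ y' k) z (EuclideanSpace.single j (1:ℝ)) := by
      intro i
      filter_upwards [hU.mem_nhds hy] with z hz
      rw [hV]
      beta_reduce
      rw [WithLp.ofLp_sum, Finset.sum_apply]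
      refine Finset.sum_congr rfl fun j _ => ?_
      rw [PiLp.smul_apply, smul_eq_mul]
      congr 1
      have hk : fderiv ℝ (fun y' => φ y' k) z
          = (EuclideanSpace.proj k : Euc n →L[ℝ] ℝ).comp (fderiv ℝ φ z) :=
        ((EuclideanSpace.proj k : Euc n →L[ℝ] ℝ).hasFDerivAt.comp z
          (hφdiff z hz).hasFDerivAt).fderiv
      rw [hk]
      rfl
    rw [Finset.sum_congr rfl fun i _ => by rw [(hVk i).fderiv_eq]]
    have h0 := hmin y hy k
    unfold lapBel at h0
    have hne : (Real.sqrt (gramMat φ y).det)⁻¹ ≠ 0 := inv_ne_zero hsqrtpos.ne'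
    have := (mul_eq_zero.mp h0).resolve_left hne
    simpa using this
  -- assemble
  unfold lapBel
  have hmain : ∀ i : Fin p,
      fderiv ℝ (fun y' => ∑ j, Real.sqrt (gramMat φ y').det * (gramMat φ y')⁻¹ i j *
          fderiv ℝ (fun y'' => u (φ y'')) y' (EuclideanSpace.single j (1:ℝ)))
        y (EuclideanSpace.single i (1:ℝ))
        = fderiv ℝ (fderiv ℝ u) (φ y)
            (fderiv ℝ φ y (EuclideanSpace.single i (1:ℝ))) (V i y)
          + fderiv ℝ u (φ y) (fderiv ℝ (V i) y (EuclideanSpace.single i (1:ℝ))) := by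
    intro i
    rw [(hstep1 i).fderiv_eq]
    exact hstep2 i
  rw [Finset.sum_congr rfl fun i _ => hmain i]
  rw [Finset.sum_add_distrib]
  have h2nd : ∑ i, fderiv ℝ u (φ y)
      (fderiv ℝ (V i) y (EuclideanSpace.single i (1:ℝ))) = 0 := by
    rw [← map_sum, hdiv, map_zero]
  rw [h2nd, add_zero]
  have h1st : ∀ i : Fin p,
      fderiv ℝ (fderiv ℝ u) (φ y)
          (fderiv ℝ φ y (EuclideanSpace.single i (1:ℝ))) (V i y)
        = Real.sqrt (gramMat φ y).det *
            ∑ j, (gramMat φ y)⁻¹ i j *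
              fderiv ℝ (fderiv ℝ u) (φ y)
                (fderiv ℝ φ y (EuclideanSpace.single i (1:ℝ)))
                (fderiv ℝ φ y (EuclideanSpace.single j (1:ℝ))) := by
    intro i
    rw [hV, map_sum, Finset.mul_sum]
    refine Finset.sum_congr rfl fun j _ => ?_
    rw [_root_.map_smul, smul_eq_mul]
    ring
  rw [Finset.sum_congr rfl fun i _ => h1st i]
  rw [← Finset.mul_sum]
  rw [← mul_assoc, inv_mul_cancel₀ hsqrtpos.ne', one_mul]

end MainLemma

/-- Proposition 2.5. A `C²` function `u` on a domain `D ⊆ ℝⁿ` is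
strongly `p`-plurisubharmonic (the trace of its Hessian on every `p`-dimensional
subspace is positive) iff its restriction to every minimal `p`-dimensional submanifold
`M ⊆ D` is strongly subharmonic (`Δ_M(u|_M) > 0`). -/
theorem strongly_p_plurisubharmonic_iff_strongly_subharmonic_on_minimal_submanifolds
    (n p : ℕ) (hp : 1 ≤ p) (hpn : p ≤ n)
    (D : Set (Euc n)) (hD : IsEucDomain D)
    (u : Euc n → ℝ) (hu : ContDiffOn ℝ 2 u D) :
    (∀ x ∈ D, ∀ e : Fin p → Euc n, Orthonormal ℝ e → 0 < hessTraceWithin u D x e) ↔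
      (∀ M : Set (Euc n), IsMinimalSubmanifold p n M → M ⊆ D →
        ∀ x ∈ M, ∀ P : MinimalParam p n M x, ∀ y ∈ P.U,
          0 < lapBel P.φ (fun y' => u (P.φ y')) y) := by
  constructor
  · intro hL M hM hMD x hxM P y hyU
    have himg : ∀ z ∈ P.U, P.φ z ∈ D := by
      intro z hz
      have hmem : P.φ z ∈ M ∩ P.W := by
        rw [← P.image]; exact Set.mem_image_of_mem _ hz
      exact hMD hmem.1
    rw [lapBel_eq hD.1 hu P.openU P.smooth P.immersion himg P.minimal hyU]
    obtain ⟨e, he, heq⟩ := exists_orthonormal_sum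
      (fun i => fderiv ℝ P.φ y (EuclideanSpace.single i (1:ℝ)))
      (gram_posDef (P.immersion y hyU))
      (fun i j => rfl)
      (fderiv ℝ (fderiv ℝ u) (P.φ y))
    rw [heq, ← hessTrace_eq hD.1 u (himg y hyU) e]
    exact hL (P.φ y) (himg y hyU) e he
  · intro hR x hx e he
    obtain ⟨r, hr, hball⟩ := Metric.isOpen_iff.mp hD.1 x hx
    set L : Euc p →L[ℝ] Euc n :=
      ∑ i, (EuclideanSpace.proj i : Euc p →L[ℝ] ℝ).smulRight (e i) with hLdef
    have hLsingle : ∀ j, L (EuclideanSpace.single j (1:ℝ)) = e j := by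
      intro j
      rw [hLdef, ContinuousLinearMap.sum_apply]
      simp only [ContinuousLinearMap.smulRight_apply, PiLp.proj_apply,
        EuclideanSpace.single_apply]
      simp [ite_smul]
    set φ : Euc p → Euc n := fun z => x + L z with hφdef
    have hfd : ∀ z, HasFDerivAt φ L z := fun z => (L.hasFDerivAt (x := z)).const_add x
    have hfderiv : ∀ z, fderiv ℝ φ z = L := fun z => (hfd z).fderiv
    have hgram : ∀ z, gramMat φ z = 1 := by
      intro z
      ext i j
      simp only [gramMat, Matrix.of_apply, hfderiv, hLsingle, Matrix.one_apply]
      exact orthonormal_iff_ite.mp he i j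
    have hLapp : ∀ w : Euc p, L w = ∑ i, w i • e i := by
      intro w
      conv_lhs => rw [euc_eq_sum_single w]
      rw [map_sum]
      exact Finset.sum_congr rfl fun i _ => by rw [_root_.map_smul, hLsingle]
    have hLinj : Function.Injective L := by
      intro a b hab
      have hco : ∀ (w : Euc p) (j : Fin p), ⟪L w, e j⟫ = w j := by
        intro w j
        rw [hLapp, sum_inner]
        simp only [real_inner_smul_left]
        rw [Finset.sum_congr rfl fun i (_ : i ∈ Finset.univ) => by
          rw [orthonormal_iff_ite.mp he i j]]
        simp
      ext j
      rw [← hco a j, ← hco b j, hab]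
    have hmin : ∀ z : Euc p, ∀ k : Fin n, lapBel φ (fun y' => φ y' k) z = 0 := by
      intro z k
      unfold lapBel
      have hconstfn : ∀ i : Fin p,
          (fun y' => ∑ j, Real.sqrt (gramMat φ y').det * (gramMat φ y')⁻¹ i j *
            fderiv ℝ (fun y'' => φ y'' k) y' (EuclideanSpace.single j (1:ℝ)))
          = fun _ => e i k := by
        intro i
        funext y'
        have hk : fderiv ℝ (fun y'' => φ y'' k) y'
            = (EuclideanSpace.proj k : Euc n →L[ℝ] ℝ).comp L :=
          ((EuclideanSpace.proj k : Euc n →L[ℝ] ℝ).hasFDerivAt.comp y' (hfd y')).fderiv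
        rw [hk]
        simp only [hgram, Matrix.det_one, Real.sqrt_one, inv_one, Matrix.one_apply, one_mul,
          ContinuousLinearMap.comp_apply, PiLp.proj_apply, hLsingle]
        simp [ite_mul]
      have hz : ∀ i : Fin p,
          fderiv ℝ (fun y' => ∑ j, Real.sqrt (gramMat φ y').det * (gramMat φ y')⁻¹ i j *
            fderiv ℝ (fun y'' => φ y'' k) y' (EuclideanSpace.single j (1:ℝ)))
            z (EuclideanSpace.single i (1:ℝ)) = 0 := by
        intro i
        rw [hconstfn i]
        simp
      rw [Finset.sum_congr rfl fun i _ => hz i]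
      simp
    set U : Set (Euc p) := φ ⁻¹' (ball x r) with hUdef
    have hUopen : IsOpen U := by
      have : Continuous φ := continuous_const.add L.continuous
      exact this.isOpen_preimage _ isOpen_ball
    have hφ0 : φ 0 = x := by rw [hφdef]; simp
    have h0U : (0 : Euc p) ∈ U := by
      rw [hUdef]
      simp only [Set.mem_preimage, hφ0]
      exact mem_ball_self hr
    set M : Set (Euc n) := φ '' U with hMdef
    have hMW : M ⊆ ball x r := by rintro _ ⟨z, hz, rfl⟩; exact hz
    have hφinj : Function.Injective φ := by
      intro a b hab
      apply hLinj
      rw [hφdef] at hab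
      exact add_left_cancel hab
    have hsmooth : ContDiffOn ℝ 2 φ U := (contDiff_const.add L.contDiff).contDiffOn
    have himm : ∀ z ∈ U, Function.Injective (fderiv ℝ φ z) := fun z _ => by
      rw [hfderiv]; exact hLinj
    have mkparam : ∀ x' ∈ M, MinimalParam p n M x' := fun x' hx' =>
      { U := U, φ := φ, W := ball x r,
        openU := hUopen, openW := isOpen_ball, memW := hMW hx',
        smooth := hsmooth,
        immersion := himm,
        inj := fun a _ b _ h => hφinj h,
        image := (Set.inter_eq_left.mpr hMW).symm,
        minimal := fun z _ k => hmin z k }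
    have hxM : x ∈ M := ⟨0, h0U, hφ0⟩
    have hMsub : IsMinimalSubmanifold p n M := ⟨⟨x, hxM⟩, fun x' hx' => ⟨mkparam x' hx'⟩⟩
    have hMD : M ⊆ D := hMW.trans hball
    have hpos : 0 < lapBel φ (fun y' => u (φ y')) 0 :=
      hR M hMsub hMD x hxM
        ⟨U, φ, ball x r, hUopen, isOpen_ball, hMW hxM, hsmooth, himm,
          fun a _ b _ h => hφinj h, (Set.inter_eq_left.mpr hMW).symm,
          fun z _ k => hmin z k⟩ 0 h0U
    rw [lapBel_eq hD.1 hu hUopen hsmooth himm (fun z hz => hball hz) (fun z _ k => hmin z k)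
      h0U] at hpos
    have hsimp : (∑ i, ∑ j, (gramMat φ 0)⁻¹ i j *
        fderiv ℝ (fderiv ℝ u) (φ 0) (fderiv ℝ φ 0 (EuclideanSpace.single i (1:ℝ)))
          (fderiv ℝ φ 0 (EuclideanSpace.single j (1:ℝ))))
        = ∑ a, fderiv ℝ (fderiv ℝ u) x (e a) (e a) := by
      rw [hgram, inv_one]
      refine Finset.sum_congr rfl fun i _ => ?_
      rw [Finset.sum_eq_single i]
      · rw [Matrix.one_apply_eq, one_mul, hfderiv, hφ0, hLsingle]
      · intro j _ hji
        rw [Matrix.one_apply_ne (Ne.symm hji), zero_mul]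
      · intro hmem
        exact absurd (Finset.mem_univ i) hmem
    rw [hsimp] at hpos
    rw [hessTrace_eq hD.1 u hx e]
    exact hpos
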